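/- Nonexpansiveness of the stationary discrete HJB solution map in the sup norm: Let g be a numerical Hamiltonian, continuous in q and satisfying (G1) (nonincreasing in q₁ and q₃, nondecreasing in q₂ and q₄), and let ρ > 0. If grid functions U and W satisfy U_{i,j} − ρ(Δ_hU)_{i,j} + ρ·g(x_{i,j}, [D_hU]_{i,j}) = V_{i,j} and W_{i,j} − ρ(Δ_hW)_{i,j} + ρ·g(x_{i,j}, [D_hW]_{i,j}) = V′_{i,j} for all (i,j), for given grid functions V and V′, then ‖U − W‖_∞ ≤ ‖V − V′‖_∞. -/

import Mathlib

open Real Finset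

noncomputable section

/-- forward L1 coefficients `c_k^n` -/
def cF (α : ℝ) (n k : ℕ) : ℝ :=
  if k = 0 then (n : ℝ) ^ (1 - α) - ((n : ℝ) - 1) ^ (1 - α)
  else 2 * ((n : ℝ) - k) ^ (1 - α) - ((n : ℝ) + 1 - k) ^ (1 - α) - ((n : ℝ) - 1 - k) ^ (1 - α)

/-- backward L1 coefficients `c̄_n^k` (with horizon `N`) -/
def cB (α : ℝ) (N n k : ℕ) : ℝ :=
  if k = N then ((N : ℝ) - n) ^ (1 - α) - ((N : ℝ) - 1 - n) ^ (1 - α)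
  else 2 * ((k : ℝ) - n) ^ (1 - α) - ((k : ℝ) + 1 - n) ^ (1 - α) - ((k : ℝ) - 1 - n) ^ (1 - α)

/-- `ρ_α = Γ(2-α) Δt^α` -/
def rhoA (α Δt : ℝ) : ℝ := Real.Gamma (2 - α) * Δt ^ α

/-- discrete forward Caputo derivative (L1 scheme) -/
def DF (α Δt : ℝ) (w : ℕ → ℝ) (n : ℕ) : ℝ :=
  (rhoA α Δt)⁻¹ * (w n - ∑ k ∈ Finset.range n, cF α n k * w k)

/-- discrete backward Caputo derivative (L1 scheme) -/
def DB (α Δt : ℝ) (N : ℕ) (w : ℕ → ℝ) (n : ℕ) : ℝ :=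
  (rhoA α Δt)⁻¹ * (w n - ∑ k ∈ Finset.Icc (n + 1) N, cB α N n k * w k)

/-- grid functions on the uniform periodic grid of the 2-torus -/
abbrev GridFun (Nh : ℕ) := ZMod Nh → ZMod Nh → ℝ

/-- mesh step `h = 1/N_h` -/
def hstep (Nh : ℕ) : ℝ := (Nh : ℝ)⁻¹

/-- grid point `x_{i,j} = (i h, j h)` -/
def gridPt (Nh : ℕ) (i j : ZMod Nh) : ℝ × ℝ :=
  ((i.val : ℝ) * hstep Nh, (j.val : ℝ) * hstep Nh)

/-- forward difference in the first variable -/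
def D1p (Nh : ℕ) (U : GridFun Nh) (i j : ZMod Nh) : ℝ := (U (i + 1) j - U i j) / hstep Nh

/-- forward difference in the second variable -/
def D2p (Nh : ℕ) (U : GridFun Nh) (i j : ZMod Nh) : ℝ := (U i (j + 1) - U i j) / hstep Nh

/-- the discrete gradient `[D_h U]_{i,j} ∈ ℝ⁴` -/
def Dh (Nh : ℕ) (U : GridFun Nh) (i j : ZMod Nh) : Fin 4 → ℝ :=
  ![D1p Nh U i j, D1p Nh U (i - 1) j, D2p Nh U i j, D2p Nh U i (j - 1)]

/-- five point discrete Laplacian -/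
def lapl (Nh : ℕ) (U : GridFun Nh) (i j : ZMod Nh) : ℝ :=
  -(4 * U i j - U (i + 1) j - U (i - 1) j - U i (j + 1) - U i (j - 1)) / (hstep Nh) ^ 2

/-- the scalar product `(U,V)₂ = h² Σ_{i,j} U_{i,j} V_{i,j}` -/
def inner2 (Nh : ℕ) [NeZero Nh] (U V : GridFun Nh) : ℝ :=
  (hstep Nh) ^ 2 * ∑ i : ZMod Nh, ∑ j : ZMod Nh, U i j * V i j

/-- the set `𝒦_h` of discrete probability measures -/
def Kh (Nh : ℕ) [NeZero Nh] : Set (GridFun Nh) :=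
  {M | (∀ i j, 0 ≤ M i j) ∧ inner2 Nh M (fun _ _ => 1) = 1}

/-- partial derivative `∂_{q_k} g(q)` -/
def gq (g : (Fin 4 → ℝ) → ℝ) (q : Fin 4 → ℝ) (k : Fin 4) : ℝ :=
  fderiv ℝ g q (Pi.single k 1)

/-- (G1): `g` nonincreasing in `q₁, q₃` and nondecreasing in `q₂, q₄` -/
def G1 (g : (Fin 4 → ℝ) → ℝ) : Prop :=
  (∀ q : Fin 4 → ℝ, Antitone fun s => g (Function.update q 0 s)) ∧
  (∀ q : Fin 4 → ℝ, Monotone fun s => g (Function.update q 1 s)) ∧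
  (∀ q : Fin 4 → ℝ, Antitone fun s => g (Function.update q 2 s)) ∧
  (∀ q : Fin 4 → ℝ, Monotone fun s => g (Function.update q 3 s))

/-- the discrete transport operator `𝓑_{i,j}(U,M)` -/
def Bop (Nh : ℕ) (g : ZMod Nh → ZMod Nh → (Fin 4 → ℝ) → ℝ) (U M : GridFun Nh)
    (i j : ZMod Nh) : ℝ :=
  (hstep Nh)⁻¹ *
    (M i j * gq (g i j) (Dh Nh U i j) 0 - M (i - 1) j * gq (g (i - 1) j) (Dh Nh U (i - 1) j) 0
     + M (i + 1) j * gq (g (i + 1) j) (Dh Nh U (i + 1) j) 1 - M i j * gq (g i j) (Dh Nh U i j) 1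
     + M i j * gq (g i j) (Dh Nh U i j) 2 - M i (j - 1) * gq (g i (j - 1)) (Dh Nh U i (j - 1)) 2
     + M i (j + 1) * gq (g i (j + 1)) (Dh Nh U i (j + 1)) 3 - M i j * gq (g i j) (Dh Nh U i j) 3)

instance (Nh : ℕ) : Nonempty (ZMod Nh) := ⟨0⟩

/-
Compare U and W at a point where U - W is maximal. There the discrete Laplacian of U - W is
nonpositive, and the one-sided differences of U and W are ordered so that (G1) gives
g(D_h W) ≤ g(D_h U). Subtracting the two equations at that point (ρ ≥ 0) bounds max (U - W)
by V - V' there; exchanging U and W gives the other sign.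
-/

lemma hstep_nonneg (Nh : ℕ) : 0 ≤ hstep Nh := inv_nonneg.mpr (Nat.cast_nonneg Nh)

theorem G1.apply_le_apply {f : (Fin 4 → ℝ) → ℝ} (hf : G1 f) {a b : Fin 4 → ℝ}
    (h0 : b 0 ≤ a 0) (h1 : a 1 ≤ b 1) (h2 : b 2 ≤ a 2) (h3 : a 3 ≤ b 3) : f a ≤ f b := by
  obtain ⟨hf0, hf1, hf2, hf3⟩ := hf
  set c₁ := Function.update a 0 (b 0)
  set c₂ := Function.update c₁ 1 (b 1)
  set c₃ := Function.update c₂ 2 (b 2)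
  have hb : Function.update c₃ 3 (b 3) = b := by
    funext k
    fin_cases k <;> simp [c₁, c₂, c₃]
  calc f a = f (Function.update a 0 (a 0)) := by rw [Function.update_eq_self]
    _ ≤ f c₁ := hf0 a h0
    _ = f (Function.update c₁ 1 (c₁ 1)) := by rw [Function.update_eq_self]
    _ ≤ f c₂ := hf1 c₁ (by simpa [c₁] using h1)
    _ = f (Function.update c₂ 2 (c₂ 2)) := by rw [Function.update_eq_self]
    _ ≤ f c₃ := hf2 c₂ (by simpa [c₁, c₂] using h2)
    _ = f (Function.update c₃ 3 (c₃ 3)) := by rw [Function.update_eq_self]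
    _ ≤ f b := hb ▸ hf3 c₃ (by simpa [c₁, c₂, c₃] using h3)

section MaxSub

variable {Nh : ℕ} {U W : GridFun Nh} {i j : ZMod Nh}

lemma lapl_le_of_max_sub (hmax : ∀ i' j', U i' j' - W i' j' ≤ U i j - W i j) :
    lapl Nh U i j ≤ lapl Nh W i j := by
  have hsub : lapl Nh U i j - lapl Nh W i j =
      ((U (i + 1) j - W (i + 1) j) + (U (i - 1) j - W (i - 1) j) + (U i (j + 1) - W i (j + 1))
        + (U i (j - 1) - W i (j - 1)) - 4 * (U i j - W i j)) / hstep Nh ^ 2 := by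
    unfold lapl; ring
  have hnum : (U (i + 1) j - W (i + 1) j) + (U (i - 1) j - W (i - 1) j)
      + (U i (j + 1) - W i (j + 1)) + (U i (j - 1) - W i (j - 1)) - 4 * (U i j - W i j) ≤ 0 := by
    linarith [hmax (i + 1) j, hmax (i - 1) j, hmax i (j + 1), hmax i (j - 1)]
  linarith [div_nonpos_of_nonpos_of_nonneg hnum (sq_nonneg (hstep Nh))]

lemma apply_Dh_le_of_max_sub {f : (Fin 4 → ℝ) → ℝ} (hf : G1 f)
    (hmax : ∀ i' j', U i' j' - W i' j' ≤ U i j - W i j) :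
    f (Dh Nh W i j) ≤ f (Dh Nh U i j) := by
  have hh := hstep_nonneg Nh
  apply hf.apply_le_apply <;>
    simp only [Dh, D1p, D2p, Matrix.cons_val, sub_add_cancel] <;>
    apply div_le_div_of_nonneg_right _ hh
  · linarith [hmax (i + 1) j]
  · linarith [hmax (i - 1) j]
  · linarith [hmax i (j + 1)]
  · linarith [hmax i (j - 1)]

lemma sub_le_of_max_sub {f : (Fin 4 → ℝ) → ℝ} (hf : G1 f) {ρ : ℝ} (hρ : 0 ≤ ρ)
    {V V' : ℝ} (hU : U i j - ρ * lapl Nh U i j + ρ * f (Dh Nh U i j) = V)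
    (hW : W i j - ρ * lapl Nh W i j + ρ * f (Dh Nh W i j) = V')
    (hmax : ∀ i' j', U i' j' - W i' j' ≤ U i j - W i j) :
    U i j - W i j ≤ V - V' := by
  have hl := mul_le_mul_of_nonneg_left (lapl_le_of_max_sub hmax) hρ
  have hg := mul_le_mul_of_nonneg_left (apply_Dh_le_of_max_sub hf hmax) hρ
  linarith

end MaxSub

lemma sub_le_sup'_abs_sub {Nh : ℕ} [NeZero Nh] {g : ZMod Nh → ZMod Nh → (Fin 4 → ℝ) → ℝ}
    (hg1 : ∀ i j, G1 (g i j)) {ρ : ℝ} (hρ : 0 ≤ ρ) {U W V V' : GridFun Nh}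
    (hU : ∀ i j, U i j - ρ * lapl Nh U i j + ρ * g i j (Dh Nh U i j) = V i j)
    (hW : ∀ i j, W i j - ρ * lapl Nh W i j + ρ * g i j (Dh Nh W i j) = V' i j) (i j : ZMod Nh) :
    U i j - W i j ≤
      univ.sup' univ_nonempty fun p : ZMod Nh × ZMod Nh => |V p.1 p.2 - V' p.1 p.2| := by
  obtain ⟨⟨i₀, j₀⟩, -, hmax⟩ :=
    exists_max_image univ (fun p : ZMod Nh × ZMod Nh => U p.1 p.2 - W p.1 p.2) univ_nonempty
  have hmax' : ∀ i' j', U i' j' - W i' j' ≤ U i₀ j₀ - W i₀ j₀ := fun i' j' =>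
    hmax (i', j') (mem_univ _)
  calc U i j - W i j ≤ U i₀ j₀ - W i₀ j₀ := hmax' i j
    _ ≤ V i₀ j₀ - V' i₀ j₀ := sub_le_of_max_sub (hg1 i₀ j₀) hρ (hU i₀ j₀) (hW i₀ j₀) hmax'
    _ ≤ |V i₀ j₀ - V' i₀ j₀| := le_abs_self _
    _ ≤ _ := le_sup' (fun p : ZMod Nh × ZMod Nh => |V p.1 p.2 - V' p.1 p.2|) (mem_univ (i₀, j₀))

theorem stationary_HJ_nonexpansive_general (Nh : ℕ) [NeZero Nh]
    (g : ZMod Nh → ZMod Nh → (Fin 4 → ℝ) → ℝ)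
    (hg1 : ∀ i j, G1 (g i j))
    (ρ : ℝ) (hρ : 0 < ρ) (U W V V' : GridFun Nh)
    (hU : ∀ i j, U i j - ρ * lapl Nh U i j + ρ * g i j (Dh Nh U i j) = V i j)
    (hW : ∀ i j, W i j - ρ * lapl Nh W i j + ρ * g i j (Dh Nh W i j) = V' i j) :
    (Finset.univ.sup' Finset.univ_nonempty
        fun p : ZMod Nh × ZMod Nh => |U p.1 p.2 - W p.1 p.2|)
      ≤ Finset.univ.sup' Finset.univ_nonempty
        fun p : ZMod Nh × ZMod Nh => |V p.1 p.2 - V' p.1 p.2| := by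
  have hsymm : (univ.sup' univ_nonempty fun p : ZMod Nh × ZMod Nh => |V' p.1 p.2 - V p.1 p.2|)
      = univ.sup' univ_nonempty fun p : ZMod Nh × ZMod Nh => |V p.1 p.2 - V' p.1 p.2| :=
    sup'_congr _ rfl fun p _ => abs_sub_comm _ _
  refine sup'_le _ _ fun p _ => abs_sub_le_iff.mpr ⟨?_, ?_⟩
  · exact sub_le_sup'_abs_sub hg1 hρ.le hU hW p.1 p.2
  · exact hsymm ▸ sub_le_sup'_abs_sub hg1 hρ.le hW hU p.1 p.2

/-- Nonexpansiveness in the sup norm of the stationary discrete HJB solution map. -/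
theorem stationary_HJ_nonexpansive (Nh : ℕ) [NeZero Nh]
    (g : ZMod Nh → ZMod Nh → (Fin 4 → ℝ) → ℝ)
    (hgc : ∀ i j, Continuous (g i j)) (hg1 : ∀ i j, G1 (g i j))
    (ρ : ℝ) (hρ : 0 < ρ) (U W V V' : GridFun Nh)
    (hU : ∀ i j, U i j - ρ * lapl Nh U i j + ρ * g i j (Dh Nh U i j) = V i j)
    (hW : ∀ i j, W i j - ρ * lapl Nh W i j + ρ * g i j (Dh Nh W i j) = V' i j) :
    (Finset.univ.sup' Finset.univ_nonempty
        fun p : ZMod Nh × ZMod Nh => |U p.1 p.2 - W p.1 p.2|)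
      ≤ Finset.univ.sup' Finset.univ_nonempty
        fun p : ZMod Nh × ZMod Nh => |V p.1 p.2 - V' p.1 p.2| :=
  stationary_HJ_nonexpansive_general Nh g hg1 ρ hρ U W V V' hU hW
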